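/- arXiv:1910.04151 — 2 statements merged into one kernel-verified Lean document; each statement's English description precedes it below -/
import Mathlib

section
/- Let W and B be unitary n×n complex matrices with B W Bᴴ = W⁻¹. Let ε ∈ ℝ, let H be Hermitian with all eigenvalues in the open interval (ε, ε + 2π) and exp(iH) = W, and let H′ be Hermitian with all eigenvalues in the open interval (−ε, −ε + 2π) and exp(iH′) = W. Then B H Bᴴ = 2π·1 − H′. (The reflection-symmetry constraint B H^ε_W Bᴴ = −H^{−ε}_W + 2π·1 on the Wannier Hamiltonian.) -/
/-!
A self-adjoint `a` whose spectrum lies in `(c, c + 2π)` is determined by `exp (I • a)`: shifting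
by `c + π` moves the spectrum into `(-π, π)`, where the principal argument, applied through the
continuous functional calculus, inverts `x ↦ exp (I • x)`. For the theorem, `k = 2π - B H Bᴴ` is
self-adjoint with spectrum `2π - σ(H) ⊆ (-ε, -ε + 2π)`, and
`exp (I • k) = B (exp (I • H))ᴴ Bᴴ = B Wᴴ Bᴴ = W` because `B W Bᴴ = W⁻¹ = Wᴴ`; so `k = H'`.
-/

open Complex Matrix Set
open scoped Real

lemma spectrum_algebraMap_add_subset_Ioo {A : Type*} [Ring A] [Algebra ℝ A] {x : A}
    {t c d : ℝ} (h : spectrum ℝ x ⊆ Ioo c d) :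
    spectrum ℝ (algebraMap ℝ A t + x) ⊆ Ioo (t + c) (t + d) := by
  rw [← spectrum.singleton_add_eq, singleton_add]
  rintro _ ⟨y, hy, rfl⟩
  exact ⟨by linarith [(h hy).1], by linarith [(h hy).2]⟩

lemma Matrix.IsHermitian.spectrum_real_subset {n 𝕜 : Type*} [Fintype n] [DecidableEq n]
    [RCLike 𝕜] {M : Matrix n n 𝕜} (hM : M.IsHermitian) {s : Set ℝ}
    (h : ∀ i, hM.eigenvalues i ∈ s) : spectrum ℝ M ⊆ s :=
  hM.spectrum_real_eq_range_eigenvalues ▸ range_subset_iff.2 h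

section NormedAlgebra

variable {A : Type*} [NormedRing A] [NormedAlgebra ℂ A] [CompleteSpace A]

lemma NormedSpace.exp_I_smul_algebraMap_add (t : ℝ) (x : A) :
    exp (I • (algebraMap ℝ A t + x)) = algebraMap ℂ A (cexp (I * t)) * exp (I • x) := by
  let +nondep : NormedAlgebra ℚ A := .restrictScalars ℚ ℂ A
  rw [smul_add, IsScalarTower.algebraMap_apply ℝ ℂ A, Algebra.smul_def I, ← map_mul,
    exp_add_of_commute (Algebra.commute_algebraMap_left _ _), ← algebraMap_exp_comm,
    Complex.exp_eq_exp_ℂ, Complex.coe_algebraMap]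

lemma NormedSpace.exp_unitary_conj [StarMul A] {b : A} (hb : b ∈ unitary A) (x : A) :
    exp (b * x * star b) = b * exp x * star b := by
  let +nondep : NormedAlgebra ℚ A := .restrictScalars ℚ ℂ A
  simpa [← Unitary.star_eq_inv] using exp_units_conj (Unitary.toUnits ⟨b, hb⟩) x

end NormedAlgebra

section CStarAlgebra

variable {A : Type*} [CStarAlgebra A]

lemma IsSelfAdjoint.norm_lt_of_spectrum_subset_Ioo [Nontrivial A] {x : A}
    (hx : IsSelfAdjoint x) {r : ℝ} (h : spectrum ℝ x ⊆ Ioo (-r) r) : ‖x‖ < r := by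
  rcases CStarAlgebra.norm_or_neg_norm_mem_spectrum hx with hmem | hmem
  · exact (h hmem).2
  · linarith [(h hmem).1]

lemma IsSelfAdjoint.cfc_arg_exp_I_smul {x : A} (hx : IsSelfAdjoint x)
    (h : spectrum ℝ x ⊆ Ioo (-π) π) :
    cfc (fun z : ℂ ↦ (arg z : ℂ)) (NormedSpace.exp (I • x)) = x := by
  nontriviality A
  simpa using congr(($(argSelfAdjoint_expUnitary (x := ⟨x, hx⟩)
    (hx.norm_lt_of_spectrum_subset_Ioo h)) : A))

lemma IsSelfAdjoint.eq_algebraMap_add_cfc_arg {x : A} (hx : IsSelfAdjoint x) {c : ℝ}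
    (h : spectrum ℝ x ⊆ Ioo c (c + 2 * π)) :
    x = algebraMap ℝ A (c + π) + cfc (fun z : ℂ ↦ (arg z : ℂ))
      (algebraMap ℂ A (cexp (I * ↑(-(c + π)))) * NormedSpace.exp (I • x)) := by
  have hshift : IsSelfAdjoint (algebraMap ℝ A (-(c + π)) + x) :=
    (IsSelfAdjoint.algebraMap A (.all _)).add hx
  have hσ : spectrum ℝ (algebraMap ℝ A (-(c + π)) + x) ⊆ Ioo (-π) π := by
    convert spectrum_algebraMap_add_subset_Ioo (t := -(c + π)) h using 2 <;> ring
  rw [← NormedSpace.exp_I_smul_algebraMap_add, hshift.cfc_arg_exp_I_smul hσ, ← add_assoc,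
    ← map_add, add_neg_cancel, map_zero, zero_add]

lemma IsSelfAdjoint.eq_of_exp_I_smul_eq {a b : A} (ha : IsSelfAdjoint a) (hb : IsSelfAdjoint b)
    {c : ℝ} (hσa : spectrum ℝ a ⊆ Ioo c (c + 2 * π)) (hσb : spectrum ℝ b ⊆ Ioo c (c + 2 * π))
    (h : NormedSpace.exp (I • a) = NormedSpace.exp (I • b)) : a = b := by
  rw [ha.eq_algebraMap_add_cfc_arg hσa, hb.eq_algebraMap_add_cfc_arg hσb, h]

theorem IsSelfAdjoint.unitary_conj_eq_two_pi_sub {w b h h' : A} (hb : b ∈ unitary A)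
    (hwb : b * w * star b = star w) {ε : ℝ} (hh : IsSelfAdjoint h) (hh' : IsSelfAdjoint h')
    (hσ : spectrum ℝ h ⊆ Ioo ε (ε + 2 * π)) (hσ' : spectrum ℝ h' ⊆ Ioo (-ε) (-ε + 2 * π))
    (hexp : NormedSpace.exp (I • h) = w) (hexp' : NormedSpace.exp (I • h') = w) :
    b * h * star b = algebraMap ℝ A (2 * π) - h' := by
  set k := algebraMap ℝ A (2 * π) + -(b * h * star b) with hk_def
  have hk : IsSelfAdjoint k :=
    (IsSelfAdjoint.algebraMap A (.all _)).add (hh.conjugate b).neg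
  have hσk : spectrum ℝ k ⊆ Ioo (-ε) (-ε + 2 * π) := by
    have hσneg : spectrum ℝ (-(b * h * star b)) ⊆ Ioo (-(ε + 2 * π)) (-ε) := by
      rw [← spectrum.neg_eq, Unitary.spectrum_star_right_conjugate (U := ⟨b, hb⟩)]
      intro y hy
      exact ⟨by linarith [(hσ hy).2], by linarith [(hσ hy).1]⟩
    convert spectrum_algebraMap_add_subset_Ioo hσneg using 2 <;> ring
  have hexpk : NormedSpace.exp (I • k) = w := by
    have hstar : I • -(b * h * star b) = b * star (I • h) * star b := by
      rw [star_smul, hh.star_eq, Complex.star_def, conj_I, neg_smul, mul_neg, neg_mul,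
        mul_smul_comm, smul_mul_assoc, smul_neg]
    have hperiod : cexp (I * ↑(2 * π)) = 1 := by
      rw [mul_comm]; push_cast; exact exp_two_pi_mul_I
    rw [NormedSpace.exp_I_smul_algebraMap_add, hperiod, map_one, one_mul, hstar,
      NormedSpace.exp_unitary_conj hb, ← NormedSpace.star_exp, hexp]
    simpa only [star_mul, star_star, mul_assoc] using congrArg star hwb
  rw [hh'.eq_of_exp_I_smul_eq hk hσ' hσk (hexp'.trans hexpk.symm), hk_def,
    sub_add_cancel_left, neg_neg]

end CStarAlgebra

/-- If `B W Bᴴ = W⁻¹` for unitary `W, B`, and `H`, `H′` are Hermitian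
branch-cut logarithms of `W` with eigenvalues in `(ε, ε + 2π)` and `(-ε, -ε + 2π)`
respectively, then `B H Bᴴ = 2π·1 - H′`. -/
theorem type_II_QTI_stmt9 (n : ℕ) (W B : Matrix (Fin n) (Fin n) ℂ)
    (hW : Wᴴ * W = 1) (hB : Bᴴ * B = 1)
    (hWB : B * W * Bᴴ = W⁻¹) (ε : ℝ)
    (H H' : Matrix (Fin n) (Fin n) ℂ)
    (hH : H.IsHermitian) (hH' : H'.IsHermitian)
    (hHe : ∀ i, hH.eigenvalues i ∈ Set.Ioo ε (ε + 2 * Real.pi))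
    (hH'e : ∀ i, hH'.eigenvalues i ∈ Set.Ioo (-ε) (-ε + 2 * Real.pi))
    (hHexp : NormedSpace.exp (Complex.I • H) = W)
    (hH'exp : NormedSpace.exp (Complex.I • H') = W) :
    B * H * Bᴴ = ((2 * Real.pi : ℝ) : ℂ) • (1 : Matrix (Fin n) (Fin n) ℂ) - H' := by
  rw [inv_eq_left_inv hW] at hWB
  -- The L2 operator norm makes matrices a C⋆-algebra without changing their topology.
  open scoped Matrix.Norms.L2Operator in
  refine (IsSelfAdjoint.unitary_conj_eq_two_pi_sub (mem_unitaryGroup_iff'.2 hB) hWB hH hH'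
    (hH.spectrum_real_subset hHe) (hH'.spectrum_real_subset hH'e) hHexp hH'exp).trans ?_
  rw [Algebra.algebraMap_eq_smul_one, Complex.coe_smul]
end

section
/- Define H_SSH(k, t) = (t + cos k)σ₁ + (sin k)σ₂ and H_BBH(k_x, k_y) = σ₀ ⊗ H_SSH(k_y, t_y) + H_SSH(k_x, t_x) ⊗ σ₃, and let P = ((1/√2)·[[1,1],[1,−1]]) ⊗ σ₀. Then P is unitary, its columns are eigenvectors of σ₁⊗σ₀, and for every k* ∈ {0, π} and every real k_y, Pᴴ H_BBH(k*, k_y) P is the block-diagonal matrix with 2×2 blocks H₁(k_y) = H_SSH(k_y, t_y) + (t_x + cos k*)σ₃ and H₂(k_y) = H_SSH(k_y, t_y) − (t_x + cos k*)σ₃. -/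
open Matrix
open scoped Kronecker

noncomputable section

/-- Pauli matrix `σ₀` (the 2×2 identity). -/
def σ0 : Matrix (Fin 2) (Fin 2) ℂ := 1
/-- Pauli matrix `σ₁`. -/
def σ1 : Matrix (Fin 2) (Fin 2) ℂ := !![0, 1; 1, 0]
/-- Pauli matrix `σ₂`. -/
def σ2 : Matrix (Fin 2) (Fin 2) ℂ := !![0, -Complex.I; Complex.I, 0]
/-- Pauli matrix `σ₃`. -/
def σ3 : Matrix (Fin 2) (Fin 2) ℂ := !![1, 0; 0, -1]

/-- The SSH Bloch Hamiltonian `H_SSH(k, t) = (t + cos k)σ₁ + (sin k)σ₂`. -/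
def HSSH (k t : ℝ) : Matrix (Fin 2) (Fin 2) ℂ :=
  ((t + Real.cos k : ℝ) : ℂ) • σ1 + ((Real.sin k : ℝ) : ℂ) • σ2

/-- The BBH quadrupole Bloch Hamiltonian. -/
def HBBH (tx ty kx ky : ℝ) : Matrix (Fin 2 × Fin 2) (Fin 2 × Fin 2) ℂ :=
  σ0 ⊗ₖ HSSH ky ty + HSSH kx tx ⊗ₖ σ3

/-- The basis-change matrix `P = ((1/√2)·[[1,1],[1,-1]]) ⊗ σ₀`. -/
def Pmat : Matrix (Fin 2 × Fin 2) (Fin 2 × Fin 2) ℂ :=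
  (((1 / Real.sqrt 2 : ℝ) : ℂ) • !![1, 1; 1, -1]) ⊗ₖ σ0

/-- Identification of `Fin 2 × Fin 2` with `Fin 2 ⊕ Fin 2` grouping by the first
(block) index, used to express `2×2`-block matrices in Kronecker coordinates. -/
def toSum : Fin 2 × Fin 2 → Fin 2 ⊕ Fin 2 :=
  fun p => if p.1 = 0 then Sum.inl p.2 else Sum.inr p.2


lemma s2 : ((Real.sqrt 2 : ℂ)) * ((Real.sqrt 2 : ℂ)) = 2 := by
  have : Real.sqrt 2 * Real.sqrt 2 = 2 := Real.mul_self_sqrt (by norm_num)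
  exact_mod_cast this

lemma part1 : Pmatᴴ * Pmat = 1 := by
  have h2 : ((Real.sqrt 2 : ℝ) : ℂ)^2 = 2 := by rw [sq]; exact s2
  ext ⟨i1, i2⟩ ⟨j1, j2⟩
  simp [Pmat, σ0, Matrix.mul_apply, Fintype.sum_prod_type, Fin.sum_univ_succ,
    Matrix.kroneckerMap_apply, Matrix.one_apply]
  fin_cases i1 <;> fin_cases i2 <;> fin_cases j1 <;> fin_cases j2 <;>
    simp [Matrix.one_apply] <;> field_simp <;> linear_combination -s2

lemma part2 (j : Fin 2 × Fin 2) : (σ1 ⊗ₖ σ0).mulVec (fun i => Pmat i j) =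
    (if j.1 = 0 then (1 : ℂ) else -1) • fun i => Pmat i j := by
  obtain ⟨j1, j2⟩ := j
  funext ⟨i1, i2⟩
  simp [Pmat, σ0, σ1, Matrix.mulVec, dotProduct, Fintype.sum_prod_type,
    Fin.sum_univ_succ, Matrix.kroneckerMap_apply, Matrix.one_apply]
  fin_cases i1 <;> fin_cases i2 <;> fin_cases j1 <;> fin_cases j2 <;>
    simp [Matrix.one_apply]

lemma part3 (tx ty kx ky : ℝ) (h : Real.sin kx = 0) :
    Pmatᴴ * HBBH tx ty kx ky * Pmat =
      (Matrix.fromBlocks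
          (HSSH ky ty + ((tx + Real.cos kx : ℝ) : ℂ) • σ3) 0 0
          (HSSH ky ty - ((tx + Real.cos kx : ℝ) : ℂ) • σ3)).submatrix toSum toSum := by
  ext ⟨i1, i2⟩ ⟨j1, j2⟩
  simp [Pmat, HBBH, HSSH, σ0, σ1, σ2, σ3, toSum, h, Matrix.mul_apply,
    Fintype.sum_prod_type, Fin.sum_univ_succ, Matrix.kroneckerMap_apply,
    Matrix.one_apply, Matrix.fromBlocks, Matrix.submatrix_apply]
  have h2 : ((Real.sqrt 2 : ℝ) : ℂ)^2 = 2 := by rw [sq]; exact s2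
  fin_cases i1 <;> fin_cases i2 <;> fin_cases j1 <;> fin_cases j2 <;>
    simp [Matrix.one_apply, Matrix.fromBlocks] <;> field_simp <;>
    ring_nf <;> push_cast <;> simp [h2] <;> ring_nf

/-- `P` is unitary, its columns are eigenvectors of `σ₁⊗σ₀`, and at
the high-symmetry lines `k* ∈ {0, π}` it block-diagonalizes the BBH Hamiltonian
into `H₁ = H_SSH(k_y, t_y) + (t_x + cos k*)σ₃` and
`H₂ = H_SSH(k_y, t_y) - (t_x + cos k*)σ₃`. -/
theorem type_II_QTI_stmt13 (tx ty : ℝ) :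
    Pmatᴴ * Pmat = 1 ∧
    (∀ j : Fin 2 × Fin 2, (σ1 ⊗ₖ σ0).mulVec (fun i => Pmat i j) =
      (if j.1 = 0 then (1 : ℂ) else -1) • fun i => Pmat i j) ∧
    ∀ kstar ∈ ({0, Real.pi} : Set ℝ), ∀ ky : ℝ,
      Pmatᴴ * HBBH tx ty kstar ky * Pmat =
        (Matrix.fromBlocks
            (HSSH ky ty + ((tx + Real.cos kstar : ℝ) : ℂ) • σ3) 0 0
            (HSSH ky ty - ((tx + Real.cos kstar : ℝ) : ℂ) • σ3)).submatrix toSum toSum := by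
  refine ⟨part1, part2, ?_⟩
  intro kstar hk ky
  simp only [Set.mem_insert_iff, Set.mem_singleton_iff] at hk
  obtain rfl | rfl := hk
  · exact part3 tx ty 0 ky (by simp)
  · exact part3 tx ty Real.pi ky Real.sin_pi

end
end
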